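/- arXiv:1510.02178 — 5 statements merged into one kernel-verified Lean document; each statement's English description precedes it below -/
import Mathlib

section
/- Let λ be an eigenvalue of the Laplacian tensor L(G^{k,k/2}). Then there exist a nonempty subset U ⊆ V with the induced subgraph G[U] connected and a diagonal matrix E = diag(ε_u)_{u∈U} with every ε_u a k-th root of unity such that λ is an eigenvalue of the complex matrix D_U − E·A_U·E. Moreover, if λ is an H-eigenvalue of L(G^{k,k/2}), then there exists a nonempty U ⊆ V with G[U] connected such that λ is an eigenvalue of the real symmetric matrix D_U − A_U. -/
open scoped BigOperators
open Matrix

/-!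
Multiplying the eigen-equation at `(u, v)` by `x (u, v)` gives
`(d_u − λ) · x (u, v) ^ k = P u · ∑_{w ∼ u} P w`, where `P u` is the product of `x` over the
half edge of `u`; the right-hand side does not depend on `v`. On a connected component `U` of
the support of `P` this becomes a row of a matrix eigen-equation. If `d_u ≠ λ`, all
`x (u, v) ^ k` coincide, so `P u ^ k = y_u ^ k` for `y_u := x (u, v₀) ^ (k / 2)`, and
`ε_u := P u / y_u` is a `k`-th root of unity with `(d_u − λ) y_u = ε_u ∑_{w ∼ u} ε_w y_w`;
if `d_u = λ` the row sum vanishes and `ε_u = 1`, `y_u = P u` work. For a real eigenvector,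
`P u ^ 2 = x (u, v₀) ^ k` since both are nonnegative with equal `s`-th powers, so `P` itself is an
eigenvector of `D_U − A_U`. If `P` vanishes identically, `λ = d_u` at any `u` where `x` is
nonzero, and `U = {u}` works.
-/

/-- `lam` is an eigenvalue of the Laplacian tensor `L(G^{k,k/2})` of the generalized power
hypergraph `G^{k,k/2}` with eigenvector `x`. -/
def IsLapEigenpair {V : Type*} [Fintype V] [DecidableEq V] (k s : ℕ)
    (G : SimpleGraph V) [DecidableRel G.Adj]
    (lam : ℂ) (x : V × Fin s → ℂ) : Prop :=
  x ≠ 0 ∧ ∀ (u : V) (v : Fin s),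
    ((G.degree u : ℂ) - lam) * x (u, v) ^ (k - 1) =
      ∑ w ∈ G.neighborFinset u,
        (∏ p ∈ Finset.univ.erase v, x (u, p)) * ∏ q : Fin s, x (w, q)

namespace SimpleGraph

variable {V : Type*} (G : SimpleGraph V)

theorem exists_induce_connected_closed (S : Set V) {u₀ : V} (hu₀ : u₀ ∈ S) :
    ∃ U ⊆ S, u₀ ∈ U ∧ (∀ u ∈ U, ∀ w ∈ S, G.Adj u w → w ∈ U) ∧ (G.induce U).Connected := by
  set C := (G.induce S).connectedComponentMk ⟨u₀, hu₀⟩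
  refine ⟨Subtype.val '' C.supp, by simp, ⟨_, rfl, rfl⟩, ?_, ?_⟩
  · rintro _ ⟨u, hu, rfl⟩ w hw huw
    refine ⟨⟨w, hw⟩, ?_, rfl⟩
    rw [ConnectedComponent.mem_supp_iff] at hu ⊢
    rw [← hu]
    exact (ConnectedComponent.connectedComponentMk_eq_of_adj
      (show (G.induce S).Adj u ⟨w, hw⟩ from huw)).symm
  · let φ : C.toSimpleGraph →g G.induce (Subtype.val '' C.supp) :=
      ⟨fun u => ⟨u.1.1, u.1, u.2, rfl⟩, fun h => h⟩
    refine C.connected_toSimpleGraph.map φ ?_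
    rintro ⟨_, u, hu, rfl⟩
    exact ⟨⟨u, hu⟩, rfl⟩

variable [Fintype V] [DecidableRel G.Adj]

theorem submatrix_adjMatrix_mulVec_apply {K : Type*} [NonAssocSemiring K] (U : Finset V)
    (Q : V → K) (u : U) (hQ : ∀ w, G.Adj u w → w ∉ U → Q w = 0) :
    ((G.adjMatrix K).submatrix Subtype.val Subtype.val *ᵥ fun j : U => Q j) u =
      ∑ w ∈ G.neighborFinset u, Q w := by
  rw [← adjMatrix_mulVec_apply]
  simp only [mulVec, dotProduct, submatrix_apply]
  rw [Finset.sum_coe_sort U fun w => G.adjMatrix K u w * Q w]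
  refine Finset.sum_subset (Finset.subset_univ U) fun w _ hw => ?_
  by_cases huw : G.Adj u w
  · simp [hQ w huw hw]
  · simp [huw]

variable [DecidableEq V] {K : Type*} [CommRing K]

/-- The matrix `D_U − E·A_U·E` with `E = diag ε`; the degrees are those of `G`, not of `G[U]`. -/
def twistedInducedLapMatrix (U : Finset V) (ε : U → K) : Matrix U U K :=
  diagonal (fun u : U => (G.degree u.1 : K)) -
    diagonal ε * (G.adjMatrix K).submatrix Subtype.val Subtype.val * diagonal ε

theorem twistedInducedLapMatrix_mulVec_apply (U : Finset V) (ε y : U → K) (u : U) :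
    (G.twistedInducedLapMatrix U ε *ᵥ y) u =
      G.degree u.1 * y u -
        ε u * ((G.adjMatrix K).submatrix Subtype.val Subtype.val *ᵥ (ε * y)) u := by
  have hdiag : diagonal ε *ᵥ y = ε * y := funext (mulVec_diagonal ε y)
  simp only [twistedInducedLapMatrix, sub_mulVec, ← mulVec_mulVec, hdiag, Pi.sub_apply,
    mulVec_diagonal]

theorem twistedInducedLapMatrix_one (U : Finset V) :
    G.twistedInducedLapMatrix U (fun _ => (1 : K)) =
      diagonal (fun u : U => (G.degree u.1 : K)) -
        (G.adjMatrix K).submatrix Subtype.val Subtype.val := by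
  simp [twistedInducedLapMatrix]

theorem sum_neighborFinset_pi_single {lam : K} {u₁ : V} (hdeg : (G.degree u₁ : K) = lam) (u : V)
    (hu : (Pi.single u₁ 1 : V → K) u ≠ 0) :
    ∑ w ∈ G.neighborFinset u, (Pi.single u₁ 1 : V → K) w =
      (G.degree u - lam) * (Pi.single u₁ 1 : V → K) u := by
  obtain rfl : u = u₁ := by
    by_contra hne
    exact hu (Pi.single_eq_of_ne hne _)
  simp [Finset.sum_pi_single', hdeg]

theorem exists_twistedInducedLapMatrix_mulVec_eq (lam : K) (Q ε y : V → K) {u₀ : V} (hu₀ : Q u₀ ≠ 0)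
    (hQ : ∀ u, Q u ≠ 0 →
      ε u * y u = Q u ∧ ε u * ∑ w ∈ G.neighborFinset u, Q w = (G.degree u - lam) * y u) :
    ∃ U : Finset V, U.Nonempty ∧ (G.induce (U : Set V)).Connected ∧ (∀ u ∈ U, Q u ≠ 0) ∧
      (fun u : U => y u) ≠ 0 ∧
      G.twistedInducedLapMatrix U (fun u => ε u) *ᵥ (fun u : U => y u) =
        lam • fun u : U => y u := by
  classical
  obtain ⟨U, hUQ, hu₀U, hclosed, hconn⟩ := G.exists_induce_connected_closed {u | Q u ≠ 0} hu₀
  refine ⟨U.toFinset, ⟨u₀, Set.mem_toFinset.2 hu₀U⟩, by rwa [Set.coe_toFinset],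
    fun u hu => hUQ (Set.mem_toFinset.1 hu), ?_, ?_⟩
  · intro hy
    have hy₀ : y u₀ = 0 := congrFun hy ⟨u₀, Set.mem_toFinset.2 hu₀U⟩
    exact hu₀ (by rw [← (hQ u₀ hu₀).1, hy₀, mul_zero])
  · ext u
    have hu : Q u ≠ 0 := hUQ (Set.mem_toFinset.1 u.2)
    have hεy : ((fun u : U.toFinset => ε u) * fun u : U.toFinset => y u) =
        fun j : U.toFinset => Q j :=
      funext fun j => (hQ j (hUQ (Set.mem_toFinset.1 j.2))).1
    rw [twistedInducedLapMatrix_mulVec_apply, hεy, G.submatrix_adjMatrix_mulVec_apply,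
      (hQ u hu).2, Pi.smul_apply, smul_eq_mul]
    · ring
    · intro w huw hw
      by_contra hQw
      exact hw (by simpa using hclosed u (Set.mem_toFinset.1 u.2) w hQw huw)

end SimpleGraph

theorem prod_pow_two_mul_eq {K : Type*} [CommMonoidWithZero K] [IsLeftCancelMulZero K] {s : ℕ}
    (x : Fin s → K) {c S : K} (hc : c ≠ 0) (h : ∀ v, c * x v ^ (2 * s) = (∏ v, x v) * S)
    (v₀ : Fin s) :
    (∏ v, x v) ^ (2 * s) = (x v₀ ^ (2 * s)) ^ s := by
  have hconst : ∀ v, x v ^ (2 * s) = x v₀ ^ (2 * s) :=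
    fun v => mul_left_cancel₀ hc ((h v).trans (h v₀).symm)
  rw [← Finset.prod_pow, Finset.prod_congr rfl fun v _ => hconst v, Finset.prod_const,
    Finset.card_univ, Fintype.card_fin]

theorem exists_pow_eq_one_mul_eq_prod {K : Type*} [Field K] {s : ℕ} (x : Fin s → K) {c S : K}
    (v₀ : Fin s) (hx : ∏ v, x v ≠ 0)
    (h : ∀ v, c * x v ^ (2 * s) = (∏ v, x v) * S) :
    ∃ ε y : K, ε ^ (2 * s) = 1 ∧ ε * y = ∏ v, x v ∧ ε * S = c * y := by
  by_cases hc : c = 0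
  · have hS : S = 0 := by simpa [hc, hx] using (h v₀).symm
    exact ⟨1, ∏ v, x v, one_pow _, one_mul _, by simp [hS, hc]⟩
  have hx₀ : x v₀ ≠ 0 := Finset.prod_ne_zero_iff.1 hx v₀ (Finset.mem_univ _)
  have hz : x v₀ ^ s ≠ 0 := pow_ne_zero _ hx₀
  refine ⟨(∏ v, x v) / x v₀ ^ s, x v₀ ^ s, ?_, div_mul_cancel₀ _ hz, ?_⟩
  · rw [div_pow, prod_pow_two_mul_eq x hc h v₀, ← pow_mul, ← pow_mul, mul_comm s,
      div_self (pow_ne_zero _ hx₀)]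
  · field_simp
    linear_combination (h v₀).symm

theorem eq_mul_prod_of_mul_pow_eq {s : ℕ} (x : Fin s → ℝ) (v₀ : Fin s) {c S : ℝ}
    (hx : ∏ v, x v ≠ 0)
    (h : ∀ v, c * x v ^ (2 * s) = (∏ v, x v) * S) : S = c * ∏ v, x v := by
  by_cases hc : c = 0
  · simpa [hc, hx] using (h v₀).symm
  have hsq : (∏ v, x v) ^ 2 = x v₀ ^ (2 * s) := by
    refine (pow_left_inj₀ (sq_nonneg _) ((even_two_mul s).pow_nonneg _) v₀.pos.ne').1 ?_
    rw [← pow_mul, prod_pow_two_mul_eq x hc h v₀]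
  refine mul_left_cancel₀ hx ?_
  linear_combination (h v₀).symm - c * hsq

def halfEdgeProd {V R : Type*} [CommMonoid R] {s : ℕ} (x : V × Fin s → R) (u : V) : R :=
  ∏ q, x (u, q)

theorem halfEdgeProd_ofReal {V : Type*} {s : ℕ} (x : V × Fin s → ℝ) (u : V) :
    halfEdgeProd (fun p => (x p : ℂ)) u = halfEdgeProd x u :=
  (Complex.ofReal_prod _ _).symm

namespace IsLapEigenpair

variable {V : Type*} [Fintype V] [DecidableEq V] {s : ℕ} {G : SimpleGraph V}
  [DecidableRel G.Adj] {lam : ℂ} {x : V × Fin s → ℂ}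

theorem sub_mul_pow_eq (hx : IsLapEigenpair (2 * s) s G lam x) (u : V) (v : Fin s) :
    ((G.degree u : ℂ) - lam) * x (u, v) ^ (2 * s) =
      halfEdgeProd x u * ∑ w ∈ G.neighborFinset u, halfEdgeProd x w := by
  have hk : 2 * s - 1 + 1 = 2 * s := by have := v.pos; omega
  rw [← hk, pow_succ', mul_left_comm, hx.2 u v, Finset.mul_sum, Finset.mul_sum]
  refine Finset.sum_congr rfl fun w _ => ?_
  rw [← mul_assoc, Finset.mul_prod_erase _ (fun p => x (u, p)) (Finset.mem_univ v)]
  rfl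

theorem degree_eq_of_halfEdgeProd_eq_zero (hx : IsLapEigenpair (2 * s) s G lam x)
    (hP : ∀ w, halfEdgeProd x w = 0) {u : V} {v : Fin s} (hxuv : x (u, v) ≠ 0) :
    (G.degree u : ℂ) = lam := by
  have h := hx.sub_mul_pow_eq u v
  rw [hP u, zero_mul] at h
  exact sub_eq_zero.1 ((mul_eq_zero.1 h).resolve_right (pow_ne_zero _ hxuv))

theorem sub_mul_pow_eq_of_real {xr : V × Fin s → ℝ} {lamr : ℝ}
    (hx : IsLapEigenpair (2 * s) s G lamr (fun p => (xr p : ℂ))) (u : V) (v : Fin s) :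
    ((G.degree u : ℝ) - lamr) * xr (u, v) ^ (2 * s) =
      halfEdgeProd xr u * ∑ w ∈ G.neighborFinset u, halfEdgeProd xr w := by
  have h := hx.sub_mul_pow_eq u v
  simp only [halfEdgeProd_ofReal] at h
  exact_mod_cast h


theorem exists_twistedInducedLapMatrix_eigenvector (hx : IsLapEigenpair (2 * s) s G lam x) :
    ∃ U : Finset V, U.Nonempty ∧ (G.induce (U : Set V)).Connected ∧
      ∃ ε : U → ℂ, (∀ u, ε u ^ (2 * s) = 1) ∧
        ∃ y : U → ℂ, y ≠ 0 ∧ G.twistedInducedLapMatrix U ε *ᵥ y = lam • y := by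
  obtain ⟨⟨u₁, v₀⟩, hx₁⟩ := Function.ne_iff.1 hx.1
  suffices ∃ Q ε y : V → ℂ, (∃ u₀, Q u₀ ≠ 0) ∧ ∀ u, Q u ≠ 0 → ε u ^ (2 * s) = 1 ∧
      ε u * y u = Q u ∧ ε u * ∑ w ∈ G.neighborFinset u, Q w = (G.degree u - lam) * y u by
    obtain ⟨Q, ε, y, ⟨u₀, hu₀⟩, hQ⟩ := this
    obtain ⟨U, hU, hconn, hQU, hy, hmul⟩ :=
      G.exists_twistedInducedLapMatrix_mulVec_eq lam Q ε y hu₀ fun u hu => (hQ u hu).2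
    exact ⟨U, hU, hconn, _, fun u => (hQ u (hQU u u.2)).1, _, hy, hmul⟩
  by_cases hP : ∃ u₀, halfEdgeProd x u₀ ≠ 0
  · choose! ε y hεy using fun u (hu : halfEdgeProd x u ≠ 0) =>
      exists_pow_eq_one_mul_eq_prod (fun q => x (u, q)) v₀ hu (hx.sub_mul_pow_eq u)
    exact ⟨halfEdgeProd x, ε, y, hP, hεy⟩
  · push Not at hP
    have hdeg := hx.degree_eq_of_halfEdgeProd_eq_zero hP hx₁
    refine ⟨Pi.single u₁ 1, 1, Pi.single u₁ 1, ⟨u₁, by simp⟩, fun u hu => ?_⟩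
    simp only [Pi.one_apply, one_pow, one_mul, true_and]
    exact G.sum_neighborFinset_pi_single hdeg u hu

theorem exists_induced_lapMatrix_eigenvector {xr : V × Fin s → ℝ} {lamr : ℝ}
    (hx : IsLapEigenpair (2 * s) s G lamr (fun p => (xr p : ℂ))) :
    ∃ U : Finset V, U.Nonempty ∧ (G.induce (U : Set V)).Connected ∧
      ∃ y : U → ℝ, y ≠ 0 ∧
        (diagonal (fun u : U => (G.degree u.1 : ℝ)) -
          (G.adjMatrix ℝ).submatrix Subtype.val Subtype.val) *ᵥ y = lamr • y := by
  obtain ⟨⟨u₁, v₀⟩, hx₁⟩ := Function.ne_iff.1 hx.1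
  suffices ∃ Q : V → ℝ, (∃ u₀, Q u₀ ≠ 0) ∧
      ∀ u, Q u ≠ 0 → ∑ w ∈ G.neighborFinset u, Q w = (G.degree u - lamr) * Q u by
    obtain ⟨Q, ⟨u₀, hu₀⟩, hQ⟩ := this
    obtain ⟨U, hU, hconn, -, hy, hmul⟩ :=
      G.exists_twistedInducedLapMatrix_mulVec_eq lamr Q 1 Q hu₀ fun u hu =>
        ⟨one_mul _, by rw [Pi.one_apply, one_mul, hQ u hu]⟩
    refine ⟨U, hU, hconn, _, hy, ?_⟩
    simpa [G.twistedInducedLapMatrix_one] using hmul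
  by_cases hP : ∃ u₀, halfEdgeProd xr u₀ ≠ 0
  · exact ⟨halfEdgeProd xr, hP, fun u hu =>
      eq_mul_prod_of_mul_pow_eq (fun q => xr (u, q)) v₀ hu (hx.sub_mul_pow_eq_of_real u)⟩
  · push Not at hP
    have hdeg : (G.degree u₁ : ℝ) = lamr := by
      have hP' : ∀ w, halfEdgeProd (fun p => (xr p : ℂ)) w = 0 := fun w => by
        rw [halfEdgeProd_ofReal, hP w, Complex.ofReal_zero]
      exact_mod_cast hx.degree_eq_of_halfEdgeProd_eq_zero hP' hx₁
    exact ⟨Pi.single u₁ 1, ⟨u₁, by simp⟩, G.sum_neighborFinset_pi_single hdeg⟩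

end IsLapEigenpair

theorem stmt5_general {V : Type*} [Fintype V] [DecidableEq V] (k s : ℕ)
    (hks : k = 2 * s) (G : SimpleGraph V) [DecidableRel G.Adj]
    (lam : ℂ) (hlam : ∃ x : V × Fin s → ℂ, IsLapEigenpair k s G lam x) :
    (∃ U : Finset V, U.Nonempty ∧ (G.induce (↑U : Set V)).Connected ∧
      ∃ eps : {u // u ∈ U} → ℂ, (∀ u, eps u ^ k = 1) ∧
        ∃ y : {u // u ∈ U} → ℂ, y ≠ 0 ∧
          (Matrix.diagonal (fun u : {u // u ∈ U} => (G.degree u.1 : ℂ)) -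
              Matrix.diagonal eps * (G.adjMatrix ℂ).submatrix Subtype.val Subtype.val *
                Matrix.diagonal eps) *ᵥ y = lam • y) ∧
    (∀ lamr : ℝ, lam = (lamr : ℂ) →
      (∃ xr : V × Fin s → ℝ, IsLapEigenpair k s G lam (fun v => (xr v : ℂ))) →
      ∃ U : Finset V, U.Nonempty ∧ (G.induce (↑U : Set V)).Connected ∧
        ∃ y : {u // u ∈ U} → ℝ, y ≠ 0 ∧
          (Matrix.diagonal (fun u : {u // u ∈ U} => (G.degree u.1 : ℝ)) -
              (G.adjMatrix ℝ).submatrix Subtype.val Subtype.val) *ᵥ y = lamr • y) := by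
  subst hks
  obtain ⟨x, hx⟩ := hlam
  refine ⟨hx.exists_twistedInducedLapMatrix_eigenvector, ?_⟩
  rintro lamr rfl ⟨xr, hxr⟩
  exact hxr.exists_induced_lapMatrix_eigenvector

/-- Each eigenvalue `λ` of `L(G^{k,k/2})` is an eigenvalue of `D_U − E·A_U·E` for some nonempty
`U ⊆ V` with `G[U]` connected and some diagonal matrix `E` of `k`-th roots of unity; moreover,
if `λ` is an `H`-eigenvalue (real, with a real eigenvector), then `λ` is an eigenvalue of the
real symmetric matrix `D_U − A_U` for some such `U`. -/
theorem stmt5 {V : Type*} [Fintype V] [DecidableEq V] (k s : ℕ)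
    (hk : 4 ≤ k) (hks : k = 2 * s) (G : SimpleGraph V) [DecidableRel G.Adj]
    (lam : ℂ) (hlam : ∃ x : V × Fin s → ℂ, IsLapEigenpair k s G lam x) :
    (∃ U : Finset V, U.Nonempty ∧ (G.induce (↑U : Set V)).Connected ∧
      ∃ eps : {u // u ∈ U} → ℂ, (∀ u, eps u ^ k = 1) ∧
        ∃ y : {u // u ∈ U} → ℂ, y ≠ 0 ∧
          (Matrix.diagonal (fun u : {u // u ∈ U} => (G.degree u.1 : ℂ)) -
              Matrix.diagonal eps * (G.adjMatrix ℂ).submatrix Subtype.val Subtype.val *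
                Matrix.diagonal eps) *ᵥ y = lam • y) ∧
    (∀ lamr : ℝ, lam = (lamr : ℂ) →
      (∃ xr : V × Fin s → ℝ, IsLapEigenpair k s G lam (fun v => (xr v : ℂ))) →
      ∃ U : Finset V, U.Nonempty ∧ (G.induce (↑U : Set V)).Connected ∧
        ∃ y : {u // u ∈ U} → ℝ, y ≠ 0 ∧
          (Matrix.diagonal (fun u : {u // u ∈ U} => (G.degree u.1 : ℝ)) -
              (G.adjMatrix ℝ).submatrix Subtype.val Subtype.val) *ᵥ y = lamr • y) :=
  stmt5_general k s hks G lam hlam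
end

section
/- Let G be a finite simple graph, let U ⊆ V be nonempty with the induced subgraph G[U] connected, and let E = diag(ε_u)_{u∈U} be a diagonal matrix with every ε_u a k-th root of unity. Then every eigenvalue of the complex matrix D_U − E·A_U·E is an eigenvalue of the Laplacian tensor L(G^{k,k/2}). In particular, every eigenvalue of the real symmetric matrix D_U − A_U is an H-eigenvalue of L(G^{k,k/2}). -/
open scoped BigOperators
open Matrix

/-- Key construction: a vector constant on each half edge except for a root-of-unity twist
at position `0`, supported on `U`, satisfying a quadratic relation, yields an eigenpair. -/
lemma key_construction {V : Type*} [Fintype V] [DecidableEq V] {k s : ℕ}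
    (hk : 4 ≤ k) (hks : k = 2 * s)
    (G : SimpleGraph V) [DecidableRel G.Adj] (U : Finset V) (lam : ℂ)
    (η z : V → ℂ) (x : V × Fin s → ℂ)
    (hx : ∀ p : V × Fin s, x p = if (p.2 : ℕ) = 0 then η p.1 * z p.1 else z p.1)
    (hη0 : ∀ u, η u ≠ 0) (hη : ∀ u ∈ U, η u ^ k = 1)
    (hz0 : ∀ u ∉ U, z u = 0) (hne : ∃ u, z u ≠ 0)
    (heig : ∀ u ∈ U, ((G.degree u : ℂ) - lam) * (z u ^ s) ^ 2 =
        (η u * z u ^ s) * ∑ w ∈ G.neighborFinset u ∩ U, η w * z w ^ s) :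
    IsLapEigenpair k s G lam x := by
  have hs2 : 2 ≤ s := by omega
  have hspos : 0 < s := by omega
  have hx1 : ∀ (u : V) (p : Fin s), (p : ℕ) ≠ 0 → x (u, p) = z u := by
    intro u p hp
    rw [hx]; exact if_neg hp
  have hx0 : ∀ u : V, x (u, ⟨0, hspos⟩) = η u * z u := by
    intro u; rw [hx]; simp
  have hP : ∀ w, (∏ q : Fin s, x (w, q)) = η w * z w ^ s := by
    intro w
    rw [← Finset.mul_prod_erase Finset.univ _ (Finset.mem_univ (⟨0, hspos⟩ : Fin s))]
    have h2 : ∏ q ∈ Finset.univ.erase (⟨0, hspos⟩ : Fin s), x (w, q) = z w ^ (s - 1) := by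
      rw [Finset.prod_congr rfl (fun p hp => hx1 w p
        (by simpa [Fin.ext_iff] using Finset.ne_of_mem_erase hp)),
        Finset.prod_const, Finset.card_erase_of_mem (Finset.mem_univ _),
        Finset.card_univ, Fintype.card_fin]
    rw [hx0, h2, mul_assoc]
    congr 1
    rw [← pow_succ']
    congr 1; omega
  have hsum : ∀ u, ∑ w ∈ G.neighborFinset u, (η w * z w ^ s)
      = ∑ w ∈ G.neighborFinset u ∩ U, η w * z w ^ s := by
    intro u
    refine (Finset.sum_subset Finset.inter_subset_left ?_).symm
    intro w hw hnw
    have hwU : w ∉ U := fun h => hnw (Finset.mem_inter.mpr ⟨hw, h⟩)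
    rw [hz0 w hwU, zero_pow (by omega : s ≠ 0), mul_zero]
  constructor
  · intro h0
    obtain ⟨u, hu⟩ := hne
    have h1 : x (u, ⟨1, by omega⟩) = z u := hx1 u _ (by simp)
    have := congrFun h0 (u, ⟨1, by omega⟩)
    rw [h1] at this
    exact hu this
  · intro u v
    by_cases hzu : z u = 0
    · have hxall : ∀ p : Fin s, x (u, p) = 0 := by
        intro p; rw [hx]; split_ifs <;> simp [hzu]
      obtain ⟨p, hp⟩ : (Finset.univ.erase v).Nonempty := by
        rw [← Finset.card_pos, Finset.card_erase_of_mem (Finset.mem_univ _),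
          Finset.card_univ, Fintype.card_fin]
        omega
      have hQ : ∏ p ∈ Finset.univ.erase v, x (u, p) = 0 :=
        Finset.prod_eq_zero hp (hxall p)
      rw [hxall v, zero_pow (by omega : k - 1 ≠ 0), mul_zero, ← Finset.mul_sum, hQ, zero_mul]
    · have hu : u ∈ U := by
        by_contra h; exact hzu (hz0 u h)
      have hxv : x (u, v) ≠ 0 := by
        rw [hx]; split_ifs
        · exact mul_ne_zero (hη0 u) hzu
        · exact hzu
      apply mul_right_cancel₀ hxv
      have hxk : x (u, v) ^ (k - 1) * x (u, v) = (z u ^ s) ^ 2 := by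
        rw [← pow_succ]
        have hk1 : k - 1 + 1 = k := by omega
        rw [hk1, hx]
        split_ifs
        · rw [mul_pow, hη u hu, one_mul, ← pow_mul]
          congr 1; omega
        · rw [← pow_mul]; congr 1; omega
      have hQx : (∏ p ∈ Finset.univ.erase v, x (u, p)) * x (u, v) = η u * z u ^ s := by
        rw [← hP u]
        exact Finset.prod_erase_mul _ _ (Finset.mem_univ v)
      have hR : (∑ w ∈ G.neighborFinset u,
            (∏ p ∈ Finset.univ.erase v, x (u, p)) * ∏ q : Fin s, x (w, q)) * x (u, v)
          = (η u * z u ^ s) * ∑ w ∈ G.neighborFinset u ∩ U, η w * z w ^ s := by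
        rw [Finset.sum_mul, ← hsum u, Finset.mul_sum]
        refine Finset.sum_congr rfl fun w _ => ?_
        rw [mul_right_comm, hQx, hP w]
      rw [mul_assoc, hxk, heig u hu, hR]

/-- Conversion between a sum over the subtype of `U` with adjacency indicator and a sum
over `N(u) ∩ U`. -/
lemma helper_sum {V : Type*} [Fintype V] [DecidableEq V] (G : SimpleGraph V)
    [DecidableRel G.Adj] (U : Finset V) {K : Type*} [Semiring K] (c : V → K) (u : V) :
    ∑ w : {x // x ∈ U}, (if G.Adj u w.1 then (1 : K) else 0) * c w.1
      = ∑ w ∈ G.neighborFinset u ∩ U, c w := by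
  rw [Finset.sum_coe_sort U (fun w => (if G.Adj u w then (1 : K) else 0) * c w)]
  have h : ∀ w ∈ U, (if G.Adj u w then (1 : K) else 0) * c w
      = if w ∈ G.neighborFinset u then c w else 0 := by
    intro w _
    by_cases h : G.Adj u w <;> simp [h, SimpleGraph.mem_neighborFinset]
  rw [Finset.sum_congr rfl h, Finset.sum_ite_mem, Finset.inter_comm]

/-- Let `U ⊆ V` be nonempty with `G[U]` connected, and let `E = diag(ε)` with each `ε_u`
a `k`-th root of unity. Every eigenvalue of `D_U − E·A_U·E` is an eigenvalue of
`L(G^{k,k/2})`; in particular every eigenvalue of the real symmetric matrix `D_U − A_U`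
is an `H`-eigenvalue of `L(G^{k,k/2})`. -/
theorem stmt6 {V : Type*} [Fintype V] [DecidableEq V] (k s : ℕ)
    (hk : 4 ≤ k) (hks : k = 2 * s) (G : SimpleGraph V) [DecidableRel G.Adj]
    (U : Finset V) (hUne : U.Nonempty) (hUconn : (G.induce (↑U : Set V)).Connected)
    (eps : {u // u ∈ U} → ℂ) (heps : ∀ u, eps u ^ k = 1) :
    (∀ lam : ℂ,
      (∃ y : {u // u ∈ U} → ℂ, y ≠ 0 ∧
          (Matrix.diagonal (fun u : {u // u ∈ U} => (G.degree u.1 : ℂ)) -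
              Matrix.diagonal eps * (G.adjMatrix ℂ).submatrix Subtype.val Subtype.val *
                Matrix.diagonal eps) *ᵥ y = lam • y) →
      ∃ x : V × Fin s → ℂ, IsLapEigenpair k s G lam x) ∧
    (∀ lamr : ℝ,
      (∃ y : {u // u ∈ U} → ℝ, y ≠ 0 ∧
          (Matrix.diagonal (fun u : {u // u ∈ U} => (G.degree u.1 : ℝ)) -
              (G.adjMatrix ℝ).submatrix Subtype.val Subtype.val) *ᵥ y = lamr • y) →
      ∃ xr : V × Fin s → ℝ,
        IsLapEigenpair k s G (lamr : ℂ) (fun v => (xr v : ℂ))) := by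
  have hk0 : k ≠ 0 := by omega
  have hs0 : s ≠ 0 := by omega
  constructor
  · rintro lam ⟨y, hy0, hyeq⟩
    choose r hr using fun c : ℂ => IsAlgClosed.exists_pow_nat_eq c (n := s) (by omega)
    set η : V → ℂ := fun u => if h : u ∈ U then eps ⟨u, h⟩ else 1 with hηdef
    set z : V → ℂ := fun u => if h : u ∈ U then r (y ⟨u, h⟩) else 0 with hzdef
    have hηU : ∀ (u : V) (h : u ∈ U), η u = eps ⟨u, h⟩ := fun u h => dif_pos h
    have hzU : ∀ (u : V) (h : u ∈ U), z u ^ s = y ⟨u, h⟩ := by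
      intro u h
      simp only [hzdef, dif_pos h]
      exact hr _
    have hrow : ∀ u : {x // x ∈ U}, ((G.degree u.1 : ℂ) - lam) * y u
        = eps u * ∑ w : {x // x ∈ U}, (if G.Adj u.1 w.1 then (1 : ℂ) else 0) * (eps w * y w) := by
      intro u
      have h := congrFun hyeq u
      rw [Matrix.sub_mulVec, ← Matrix.mulVec_mulVec, ← Matrix.mulVec_mulVec, Pi.sub_apply,
        Matrix.mulVec_diagonal, Pi.smul_apply, smul_eq_mul, Matrix.mulVec_diagonal] at h
      have h2 : ((G.adjMatrix ℂ).submatrix Subtype.val Subtype.val *ᵥ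
            (Matrix.diagonal eps *ᵥ y)) u
          = ∑ w : {x // x ∈ U}, (if G.Adj u.1 w.1 then (1 : ℂ) else 0) * (eps w * y w) := by
        rw [Matrix.mulVec]
        refine Finset.sum_congr rfl fun w _ => ?_
        rw [Matrix.mulVec_diagonal]
        simp [Matrix.submatrix_apply, SimpleGraph.adjMatrix_apply]
      rw [h2] at h
      linear_combination h
    refine ⟨_, key_construction hk hks G U lam η z _ (fun p => rfl) ?_ ?_ ?_ ?_ ?_⟩
    · intro u
      by_cases h : u ∈ U
      · rw [hηU u h]
        intro h0
        have := heps ⟨u, h⟩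
        rw [h0, zero_pow hk0] at this
        exact zero_ne_one this
      · simp [hηdef, h]
    · intro u h
      rw [hηU u h]; exact heps _
    · intro u h
      simp [hzdef, h]
    · obtain ⟨u0, hu0⟩ := Function.ne_iff.mp hy0
      refine ⟨u0.1, fun h => hu0 ?_⟩
      have h1 := hzU u0.1 u0.2
      rw [h, zero_pow hs0] at h1
      simpa using h1.symm
    · intro u hu
      have hr1 := hrow ⟨u, hu⟩
      have hconv : ∑ w : {x // x ∈ U}, (if G.Adj u w.1 then (1 : ℂ) else 0) * (eps w * y w)
          = ∑ w ∈ G.neighborFinset u ∩ U, η w * z w ^ s := by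
        rw [← helper_sum G U (fun w => η w * z w ^ s) u]
        refine Finset.sum_congr rfl fun w _ => ?_
        rw [hηU w.1 w.2, hzU w.1 w.2]
      rw [hconv] at hr1
      rw [hzU u hu, hηU u hu]
      linear_combination y ⟨u, hu⟩ * hr1
  · rintro lamr ⟨y, hy0, hyeq⟩
    set ηr : V → ℝ := fun u => if h : u ∈ U then (if y ⟨u, h⟩ < 0 then -1 else 1) else 1
      with hηrdef
    set zr : V → ℝ := fun u => if h : u ∈ U then |y ⟨u, h⟩| ^ ((s : ℝ)⁻¹) else 0 with hzrdef
    have hzrU : ∀ (u : V) (h : u ∈ U), zr u ^ s = |y ⟨u, h⟩| := by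
      intro u h
      simp only [hzrdef, dif_pos h]
      exact Real.rpow_inv_natCast_pow (abs_nonneg _) hs0
    have hηzr : ∀ (u : V) (h : u ∈ U), ηr u * zr u ^ s = y ⟨u, h⟩ := by
      intro u h
      rw [hzrU u h]
      simp only [hηrdef, dif_pos h]
      by_cases hy : y ⟨u, h⟩ < 0
      · rw [if_pos hy, abs_of_neg hy]; ring
      · rw [if_neg hy, abs_of_nonneg (not_lt.mp hy)]; ring
    have hηr1 : ∀ u, ηr u = 1 ∨ ηr u = -1 := by
      intro u
      simp only [hηrdef]
      split_ifs <;> simp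
    have hrow : ∀ u : {x // x ∈ U}, ((G.degree u.1 : ℝ) - lamr) * y u
        = ∑ w : {x // x ∈ U}, (if G.Adj u.1 w.1 then (1 : ℝ) else 0) * y w := by
      intro u
      have h := congrFun hyeq u
      rw [Matrix.sub_mulVec, Pi.sub_apply, Matrix.mulVec_diagonal, Pi.smul_apply,
        smul_eq_mul] at h
      have h2 : ((G.adjMatrix ℝ).submatrix Subtype.val Subtype.val *ᵥ y) u
          = ∑ w : {x // x ∈ U}, (if G.Adj u.1 w.1 then (1 : ℝ) else 0) * y w := by
        rw [Matrix.mulVec]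
        refine Finset.sum_congr rfl fun w _ => ?_
        simp [Matrix.submatrix_apply, SimpleGraph.adjMatrix_apply]
      rw [h2] at h
      linear_combination h
    have hreal : ∀ u ∈ U, ((G.degree u : ℝ) - lamr) * (zr u ^ s) ^ 2
        = (ηr u * zr u ^ s) * ∑ w ∈ G.neighborFinset u ∩ U, ηr w * zr w ^ s := by
      intro u hu
      have hr1 := hrow ⟨u, hu⟩
      have hconv : ∑ w : {x // x ∈ U}, (if G.Adj u w.1 then (1 : ℝ) else 0) * y w
          = ∑ w ∈ G.neighborFinset u ∩ U, ηr w * zr w ^ s := by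
        rw [← helper_sum G U (fun w => ηr w * zr w ^ s) u]
        refine Finset.sum_congr rfl fun w _ => ?_
        rw [hηzr w.1 w.2]
      rw [hconv] at hr1
      rw [hηzr u hu]
      have habs : (zr u ^ s) ^ 2 = y ⟨u, hu⟩ ^ 2 := by
        rw [hzrU u hu, sq_abs]
      rw [habs]
      linear_combination y ⟨u, hu⟩ * hr1
    refine ⟨fun p => if (p.2 : ℕ) = 0 then ηr p.1 * zr p.1 else zr p.1,
      key_construction hk hks G U (lamr : ℂ) (fun u => ((ηr u : ℝ) : ℂ))
        (fun u => ((zr u : ℝ) : ℂ)) _ ?_ ?_ ?_ ?_ ?_ ?_⟩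
    · intro p
      by_cases h : (p.2 : ℕ) = 0 <;> simp [h]
    · intro u
      rcases hηr1 u with h | h <;> simp [h]
    · intro u hu
      rcases hηr1 u with h | h
      · simp [h]
      · have hkeven : Even k := ⟨s, by omega⟩
        beta_reduce
        rw [h]
        push_cast
        exact hkeven.neg_one_pow
    · intro u hu
      simp [hzrdef, hu]
    · obtain ⟨u0, hu0⟩ := Function.ne_iff.mp hy0
      refine ⟨u0.1, fun h => hu0 ?_⟩
      have h1 := hzrU u0.1 u0.2
      beta_reduce at h
      rw [show zr u0.1 = 0 by exact_mod_cast h, zero_pow hs0] at h1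
      have : y ⟨u0.1, u0.2⟩ = 0 := abs_eq_zero.mp h1.symm
      simpa using this
    · intro u hu
      beta_reduce
      exact_mod_cast hreal u hu
end

section
/- For a finite simple graph G, the set of eigenvalues of the Laplacian tensor L(G^{k,k/2}) equals the union, over all nonempty subsets U ⊆ V with the induced subgraph G[U] connected and all diagonal matrices E = diag(ε_u)_{u∈U} whose diagonal entries are k-th roots of unity, of the sets of eigenvalues of the complex matrices D_U − E·A_U·E. -/
open scoped BigOperators
open Matrix

private lemma sum_neighbor_aux {V : Type*} [Fintype V] [DecidableEq V]
    (G : SimpleGraph V) [DecidableRel G.Adj] (U : Finset V) (σ : V → ℂ)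
    (f : {u // u ∈ U} → ℂ) (u : V)
    (h0 : ∀ w, G.Adj u w → w ∉ U → σ w = 0)
    (hf : ∀ j : {u // u ∈ U}, σ j.1 = f j) :
    ∑ w ∈ G.neighborFinset u, σ w
      = ∑ j : {u // u ∈ U}, (if G.Adj u j.1 then 1 else 0) * f j := by
  classical
  have h1 : ∑ j : {u // u ∈ U}, (if G.Adj u j.1 then 1 else 0) * f j
      = ∑ w ∈ U, (if G.Adj u w then σ w else 0) := by
    rw [Finset.sum_subtype U (fun x => Iff.rfl) (fun w => if G.Adj u w then σ w else 0)]
    refine Finset.sum_congr rfl fun j _ => ?_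
    rw [← hf j, ite_mul, one_mul, zero_mul]
  rw [h1, ← Finset.sum_filter]
  have h2 : U.filter (fun w => G.Adj u w) = (G.neighborFinset u).filter (fun w => w ∈ U) := by
    ext w
    simp only [Finset.mem_filter, SimpleGraph.mem_neighborFinset]
    tauto
  rw [h2]
  rw [← Finset.sum_filter_add_sum_filter_not (G.neighborFinset u) (fun w => w ∈ U) σ]
  have h3 : ∑ w ∈ (G.neighborFinset u).filter (fun w => ¬ w ∈ U), σ w = 0 := by
    refine Finset.sum_eq_zero fun w hw => ?_
    rw [Finset.mem_filter, SimpleGraph.mem_neighborFinset] at hw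
    exact h0 w hw.1 hw.2
  rw [h3, add_zero]


private lemma backward {V : Type*} [Fintype V] [DecidableEq V] (k s : ℕ)
    (hk : 4 ≤ k) (hks : k = 2 * s) (G : SimpleGraph V) [DecidableRel G.Adj] (lam : ℂ)
    (U : Finset V) (eps : {u // u ∈ U} → ℂ) (heps : ∀ u, eps u ^ k = 1)
    (y : {u // u ∈ U} → ℂ) (hy0 : y ≠ 0)
    (hyeq : (Matrix.diagonal (fun u : {u // u ∈ U} => (G.degree u.1 : ℂ)) -
                Matrix.diagonal eps * (G.adjMatrix ℂ).submatrix Subtype.val Subtype.val *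
                  Matrix.diagonal eps) *ᵥ y = lam • y) :
    ∃ x : V × Fin s → ℂ, IsLapEigenpair k s G lam x := by
  classical
  have hs2 : 2 ≤ s := by omega
  haveI : NeZero s := ⟨by omega⟩
  have hk0 : k ≠ 0 := by omega
  have hepsne : ∀ j, eps j ≠ 0 := by
    intro j h
    have := heps j
    rw [h, zero_pow hk0] at this
    exact one_ne_zero this.symm
  choose c hc using fun j => IsAlgClosed.exists_pow_nat_eq (y j) (show 0 < s by omega)
  set C : V → ℂ := fun u => if h : u ∈ U then c ⟨u, h⟩ else 0 with hC
  set E : V → ℂ := fun u => if h : u ∈ U then eps ⟨u, h⟩ else 0 with hE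
  set x : V × Fin s → ℂ := fun p => (if p.2 = 0 then E p.1 else 1) * C p.1 with hx
  have hσ : ∀ u, (∏ q : Fin s, x (u, q)) = E u * C u ^ s := by
    intro u
    calc (∏ q : Fin s, (if q = 0 then E u else 1) * C u)
        = (∏ q : Fin s, if q = 0 then E u else 1) * ∏ _q : Fin s, C u :=
          Finset.prod_mul_distrib
      _ = E u * C u ^ s := by
          rw [Finset.prod_ite_eq' Finset.univ (0 : Fin s) (fun _ => E u),
            if_pos (Finset.mem_univ _), Finset.prod_const, Finset.card_univ,
            Fintype.card_fin]
  have hσ0 : ∀ w, w ∉ U → (∏ q : Fin s, x (w, q)) = 0 := by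
    intro w hw
    rw [hσ, hE]
    simp [dif_neg hw]
  have hσU : ∀ j : {u // u ∈ U}, (∏ q : Fin s, x (j.1, q)) = eps j * y j := by
    rintro ⟨w, hw⟩
    rw [hσ, hE, hC]
    simp only [dif_pos hw]
    rw [hc ⟨w, hw⟩]
  have hmat : ∀ j : {u // u ∈ U}, ((G.degree j.1 : ℂ) - lam) * y j =
      eps j * ∑ i : {u // u ∈ U}, (if G.Adj j.1 i.1 then 1 else 0) * (eps i * y i) := by
    intro j
    have h := congrFun hyeq j
    rw [Matrix.sub_mulVec, Pi.sub_apply, Matrix.mulVec_diagonal] at h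
    simp only [Matrix.mulVec, dotProduct, Matrix.mul_diagonal, Matrix.diagonal_mul,
      Matrix.submatrix_apply, SimpleGraph.adjMatrix_apply, Pi.smul_apply,
      smul_eq_mul] at h
    have h2 : ∑ i : {u // u ∈ U}, eps j * (if G.Adj j.1 i.1 then 1 else 0) * eps i * y i
        = eps j * ∑ i : {u // u ∈ U}, (if G.Adj j.1 i.1 then 1 else 0) * (eps i * y i) := by
      rw [Finset.mul_sum]
      exact Finset.sum_congr rfl fun i _ => by ring
    rw [h2] at h
    linear_combination h
  obtain ⟨j0, hj0⟩ := Function.ne_iff.mp hy0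
  have hy00 : y j0 ≠ 0 := by simpa using hj0
  have hcj0 : c j0 ≠ 0 := by
    intro h
    exact hy00 (by rw [← hc j0, h, zero_pow (show s ≠ 0 by omega)])
  have h10 : (1 : Fin s) ≠ 0 := by
    intro h
    have h1 := congrArg Fin.val h
    rw [Fin.val_one', Fin.val_zero, Nat.mod_eq_of_lt (by omega)] at h1
    omega
  refine ⟨x, ?_, ?_⟩
  · intro h0
    apply hcj0
    have := congrFun h0 (j0.1, 1)
    simpa [hx, h10, hC, dif_pos j0.2] using this
  · intro u v
    have hrhs : ∑ w ∈ G.neighborFinset u,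
        (∏ p ∈ Finset.univ.erase v, x (u, p)) * ∏ q : Fin s, x (w, q)
        = (∏ p ∈ Finset.univ.erase v, x (u, p)) *
            ∑ w ∈ G.neighborFinset u, ∏ q : Fin s, x (w, q) := by
      rw [Finset.mul_sum]
    rw [hrhs]
    by_cases hu : ∃ h : u ∈ U, c ⟨u, h⟩ ≠ 0
    · obtain ⟨hu, hcu⟩ := hu
      set j : {u // u ∈ U} := ⟨u, hu⟩ with hj
      have hSu : ∑ w ∈ G.neighborFinset u, (∏ q : Fin s, x (w, q))
          = ∑ i : {u // u ∈ U}, (if G.Adj u i.1 then 1 else 0) * (eps i * y i) :=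
        sum_neighbor_aux G U _ _ u (fun w _ hw => hσ0 w hw) hσU
      rw [hSu]
      have hme := hmat j
      have hxuv : x (u, v) ≠ 0 := by
        simp only [hx, hC, hE, dif_pos hu]
        rcases eq_or_ne v 0 with h | h
        · simp only [h, if_pos rfl]
          exact mul_ne_zero (hepsne j) hcu
        · simp only [if_neg h, one_mul]
          exact hcu
      apply mul_left_cancel₀ hxuv
      have hxk : x (u, v) ^ k = y j ^ 2 := by
        have hζ : ((if v = (0 : Fin s) then E u else 1)) ^ k = 1 := by
          split
          · rw [hE]; simp only [dif_pos hu]; exact heps j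
          · exact one_pow k
        have : x (u, v) ^ k = C u ^ k := by
          rw [hx]
          simp only
          rw [mul_pow, hζ, one_mul]
        rw [this, hC]
        simp only [dif_pos hu]
        rw [hks, mul_comm 2 s, pow_mul, hc j]
      have hxp : x (u, v) * ∏ p ∈ Finset.univ.erase v, x (u, p) = eps j * y j := by
        rw [Finset.mul_prod_erase Finset.univ (fun p => x (u, p)) (Finset.mem_univ v)]
        exact hσU j
      calc x (u, v) * (((G.degree u : ℂ) - lam) * x (u, v) ^ (k - 1))
          = ((G.degree u : ℂ) - lam) * x (u, v) ^ k := by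
            have hpow : x (u, v) ^ k = x (u, v) ^ (k - 1) * x (u, v) := by
              conv_lhs => rw [show k = (k - 1) + 1 by omega]
              rw [pow_succ]
            rw [hpow]; ring
        _ = ((G.degree u : ℂ) - lam) * y j ^ 2 := by rw [hxk]
        _ = y j * (eps j * ∑ i : {u // u ∈ U}, (if G.Adj u i.1 then 1 else 0) * (eps i * y i)) := by
            rw [← hme]; ring
        _ = (x (u, v) * ∏ p ∈ Finset.univ.erase v, x (u, p)) *
              ∑ i : {u // u ∈ U}, (if G.Adj u i.1 then 1 else 0) * (eps i * y i) := by
            rw [hxp]; ring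
        _ = x (u, v) * ((∏ p ∈ Finset.univ.erase v, x (u, p)) *
              ∑ i : {u // u ∈ U}, (if G.Adj u i.1 then 1 else 0) * (eps i * y i)) := by
            ring
    · have hall0 : ∀ p : Fin s, x (u, p) = 0 := by
        intro p
        have hC0 : C u = 0 := by
          rw [hC]
          by_cases h : u ∈ U
          · simp only [dif_pos h]
            by_contra hne
            exact hu ⟨h, hne⟩
          · simp [dif_neg h]
        simp [hx, hC0]
      obtain ⟨p, hp⟩ : (Finset.univ.erase v).Nonempty := by
        rw [← Finset.card_pos, Finset.card_erase_of_mem (Finset.mem_univ v),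
          Finset.card_univ, Fintype.card_fin]
        omega
      rw [Finset.prod_eq_zero hp (hall0 p), hall0 v, zero_pow (show k - 1 ≠ 0 by omega),
        mul_zero, zero_mul]

private lemma forward {V : Type*} [Fintype V] [DecidableEq V] (k s : ℕ)
    (hk : 4 ≤ k) (hks : k = 2 * s) (G : SimpleGraph V) [DecidableRel G.Adj] (lam : ℂ)
    (x : V × Fin s → ℂ) (hpair : IsLapEigenpair k s G lam x) :
    ∃ U : Finset V, U.Nonempty ∧ (G.induce (↑U : Set V)).Connected ∧
        ∃ eps : {u // u ∈ U} → ℂ, (∀ u, eps u ^ k = 1) ∧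
          ∃ y : {u // u ∈ U} → ℂ, y ≠ 0 ∧
            (Matrix.diagonal (fun u : {u // u ∈ U} => (G.degree u.1 : ℂ)) -
                Matrix.diagonal eps * (G.adjMatrix ℂ).submatrix Subtype.val Subtype.val *
                  Matrix.diagonal eps) *ᵥ y = lam • y := by
  classical
  obtain ⟨hx0, heq⟩ := hpair
  have hs2 : 2 ≤ s := by omega
  haveI : NeZero s := ⟨by omega⟩
  have hk0 : k ≠ 0 := by omega
  set σ : V → ℂ := fun u => ∏ q : Fin s, x (u, q) with hσdef
  set S : V → ℂ := fun u => ∑ w ∈ G.neighborFinset u, σ w with hSdef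
  have key : ∀ (u : V) (v : Fin s),
      ((G.degree u : ℂ) - lam) * x (u, v) ^ k = σ u * S u := by
    intro u v
    have h := heq u v
    have hpow : x (u, v) ^ k = x (u, v) ^ (k - 1) * x (u, v) := by
      conv_lhs => rw [show k = (k - 1) + 1 by omega]
      rw [pow_succ]
    calc ((G.degree u : ℂ) - lam) * x (u, v) ^ k
        = x (u, v) * (((G.degree u : ℂ) - lam) * x (u, v) ^ (k - 1)) := by
          rw [hpow]; ring
      _ = x (u, v) * ∑ w ∈ G.neighborFinset u,
            (∏ p ∈ Finset.univ.erase v, x (u, p)) * σ w := by rw [h]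
      _ = σ u * S u := by
          rw [Finset.mul_sum, hSdef, Finset.mul_sum]
          refine Finset.sum_congr rfl fun w _ => ?_
          rw [← mul_assoc,
            Finset.mul_prod_erase Finset.univ (fun p => x (u, p)) (Finset.mem_univ v)]
  by_cases hall : ∀ u, σ u = 0
  · -- degenerate case : take U = {u}
    obtain ⟨⟨u, v⟩, hxv⟩ := Function.ne_iff.mp hx0
    have hxv' : x (u, v) ≠ 0 := by simpa using hxv
    have hlam : lam = (G.degree u : ℂ) := by
      have h := key u v
      rw [hall u, zero_mul] at h
      rcases mul_eq_zero.mp h with h' | h'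
      · exact (sub_eq_zero.mp h').symm
      · exact absurd h' (pow_ne_zero _ hxv')
    refine ⟨{u}, ⟨u, Finset.mem_singleton_self u⟩, ?_, fun _ => 1,
      fun _ => one_pow k, fun _ => 1, ?_, ?_⟩
    · rw [SimpleGraph.connected_iff]
      constructor
      · intro a b
        have hab : a = b := by
          apply Subtype.ext
          have ha := a.2
          have hb := b.2
          simp only [Finset.coe_singleton, Set.mem_singleton_iff] at ha hb
          rw [ha, hb]
        rw [hab]
      · exact ⟨⟨u, by simp⟩⟩

    · intro h
      exact one_ne_zero (congrFun h ⟨u, Finset.mem_singleton_self u⟩)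
    · funext j
      have hj : j.1 = u := Finset.mem_singleton.mp j.2
      rw [Matrix.sub_mulVec, Pi.sub_apply, Matrix.mulVec_diagonal]
      simp only [Matrix.mulVec, dotProduct, Matrix.mul_diagonal, Matrix.diagonal_mul,
        Matrix.submatrix_apply, SimpleGraph.adjMatrix_apply, Pi.smul_apply, smul_eq_mul]
      have hzero : ∀ i : {w // w ∈ ({u} : Finset V)},
          (1 : ℂ) * (if G.Adj j.1 i.1 then 1 else 0) * 1 * 1 = 0 := by
        intro i
        have hi : i.1 = u := Finset.mem_singleton.mp i.2
        rw [hj, hi, if_neg (G.irrefl), mul_zero, zero_mul, zero_mul]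
      rw [Finset.sum_congr rfl (fun i _ => hzero i), Finset.sum_const, smul_zero,
        sub_zero, hj, hlam]
  · push_neg at hall
    obtain ⟨u0, hu0⟩ := hall
    set Rel : V → Prop := Relation.ReflTransGen (fun a b => G.Adj a b ∧ σ b ≠ 0) u0
      with hReldef
    set U : Finset V := Finset.univ.filter Rel with hUdef
    have hmemU : ∀ {w : V}, w ∈ U ↔ Rel w := by
      intro w; simp [hUdef]
    have hu0U : u0 ∈ U := hmemU.mpr Relation.ReflTransGen.refl
    have hUT : ∀ w ∈ U, σ w ≠ 0 := by
      intro w hw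
      have h := hmemU.mp hw
      induction h with
      | refl => exact hu0
      | tail _ h2 _ => exact h2.2
    have hclosed : ∀ u' ∈ U, ∀ w, G.Adj u' w → σ w ≠ 0 → w ∈ U := by
      intro u' hu' w hadj hw
      exact hmemU.mpr ((hmemU.mp hu').tail ⟨hadj, hw⟩)
    -- the root-of-unity claim
    have claim : ∀ u : V, σ u ≠ 0 →
        ∃ e : ℂ, e ^ k = 1 ∧ ((G.degree u : ℂ) - lam) * σ u = e ^ 2 * S u := by
      intro u hu
      by_cases hdl : (G.degree u : ℂ) = lam
      · refine ⟨1, one_pow k, ?_⟩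
        have h := key u 0
        rw [hdl, sub_self, zero_mul] at h
        have hS0 : S u = 0 := by
          rcases mul_eq_zero.mp h.symm with h' | h'
          · exact absurd h' hu
          · exact h'
        rw [hdl, sub_self, zero_mul, hS0, mul_zero]
      · have hd : (G.degree u : ℂ) - lam ≠ 0 := sub_ne_zero.mpr hdl
        have hx0' : ∀ v : Fin s, x (u, v) ≠ 0 := by
          intro v h
          exact hu (Finset.prod_eq_zero (Finset.mem_univ v) h)
        set t : ℂ := x (u, 0) ^ k with htdef
        have ht0 : t ≠ 0 := pow_ne_zero _ (hx0' 0)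
        have hxt : ∀ v : Fin s, x (u, v) ^ k = t := by
          intro v
          exact mul_left_cancel₀ hd ((key u v).trans (key u 0).symm)
        have hσk : σ u ^ k = t ^ s := by
          calc σ u ^ k = ∏ v : Fin s, x (u, v) ^ k := (Finset.prod_pow _ _ _).symm
            _ = ∏ _v : Fin s, t := Finset.prod_congr rfl fun v _ => hxt v
            _ = t ^ s := by
                rw [Finset.prod_const, Finset.card_univ, Fintype.card_fin]
        obtain ⟨c, hc⟩ := IsAlgClosed.exists_pow_nat_eq t (show 0 < k by omega)
        refine ⟨σ u / c ^ s, ?_, ?_⟩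
        · have hcsk : (c ^ s) ^ k = t ^ s := by
            rw [← pow_mul, mul_comm, pow_mul, hc]
          rw [div_pow, hσk, hcsk, div_self (pow_ne_zero _ ht0)]
        · have hcs : (c ^ s) ^ 2 = t := by
            rw [← pow_mul, show s * 2 = k by omega, hc]
          rw [div_pow, hcs, div_mul_eq_mul_div, eq_div_iff ht0]
          calc ((G.degree u : ℂ) - lam) * σ u * t
              = σ u * (((G.degree u : ℂ) - lam) * t) := by ring
            _ = σ u * (σ u * S u) := by rw [key u 0]
            _ = σ u ^ 2 * S u := by ring
    set e : V → ℂ := fun u => if h : σ u ≠ 0 then (claim u h).choose else 1 with hedef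
    have he : ∀ u : V, σ u ≠ 0 →
        (e u) ^ k = 1 ∧ ((G.degree u : ℂ) - lam) * σ u = (e u) ^ 2 * S u := by
      intro u hu
      simp only [hedef, dif_pos hu]
      exact (claim u hu).choose_spec
    refine ⟨U, ⟨u0, hu0U⟩, ?_, fun j => e j.1, fun j => (he j.1 (hUT j.1 j.2)).1,
      fun j => σ j.1 * (e j.1) ^ (k - 1), ?_, ?_⟩
    · -- connectivity
      have hreach : ∀ w, Rel w → ∀ (h2 : w ∈ (↑U : Set V)),
          (G.induce (↑U : Set V)).Reachable ⟨u0, Finset.mem_coe.mpr hu0U⟩ ⟨w, h2⟩ := by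
        intro w hw
        induction hw with
        | refl => intro h2; exact SimpleGraph.Reachable.refl _
        | @tail b c hb hbc ih =>
            intro h2
            have hbU : b ∈ U := hmemU.mpr hb
            have hr := ih (Finset.mem_coe.mpr hbU)
            refine hr.trans (SimpleGraph.Adj.reachable ?_)
            exact hbc.1
      rw [SimpleGraph.connected_iff]
      refine ⟨?_, ⟨⟨u0, Finset.mem_coe.mpr hu0U⟩⟩⟩
      rintro ⟨a, ha⟩ ⟨b, hb⟩
      have hra := hreach a (hmemU.mp (Finset.mem_coe.mp ha)) ha
      have hrb := hreach b (hmemU.mp (Finset.mem_coe.mp hb)) hb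
      exact hra.symm.trans hrb
    · -- y ≠ 0
      intro h
      have h0 := congrFun h ⟨u0, hu0U⟩
      simp only [Pi.zero_apply] at h0
      rcases mul_eq_zero.mp h0 with h' | h'
      · exact hu0 h'
      · have hek := (he u0 hu0).1
        have : e u0 ≠ 0 := by
          intro hz
          rw [hz, zero_pow hk0] at hek
          exact one_ne_zero hek.symm
        exact this (pow_eq_zero_iff (show k - 1 ≠ 0 by omega) |>.mp h')
    · -- matrix equation
      funext j
      obtain ⟨u, hu⟩ := j
      have hσu := hUT u hu
      have heu := he u hσu
      rw [Matrix.sub_mulVec, Pi.sub_apply, Matrix.mulVec_diagonal]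
      simp only [Matrix.mulVec, dotProduct, Matrix.mul_diagonal, Matrix.diagonal_mul,
        Matrix.submatrix_apply, SimpleGraph.adjMatrix_apply, Pi.smul_apply, smul_eq_mul]
      have hsum : ∑ i : {w // w ∈ U},
          e u * (if G.Adj u i.1 then 1 else 0) * e i.1 * (σ i.1 * (e i.1) ^ (k - 1))
          = e u * S u := by
        have hS : S u = ∑ i : {w // w ∈ U},
            (if G.Adj u i.1 then 1 else 0) * (e i.1 * (σ i.1 * (e i.1) ^ (k - 1))) := by
          refine sum_neighbor_aux G U σ _ u ?_ ?_
          · intro w hadj hwU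
            by_contra hσw
            exact hwU (hclosed u hu w hadj hσw)
          · intro i
            have hek := (he i.1 (hUT i.1 i.2)).1
            have : e i.1 * (σ i.1 * (e i.1) ^ (k - 1)) = σ i.1 * (e i.1) ^ k := by
              conv_rhs => rw [show k = (k - 1) + 1 by omega]
              rw [pow_succ]; ring
            rw [this, hek, mul_one]
        rw [hS, Finset.mul_sum]
        refine Finset.sum_congr rfl fun i _ => ?_
        ring
      rw [hsum]
      -- now : deg * y - e u * S u = lam * y
      have hek := heu.1
      have hmain : e u * S u = ((G.degree u : ℂ) - lam) * (σ u * (e u) ^ (k - 1)) := by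
        have h2 := heu.2
        calc e u * S u = (e u) ^ k * (e u * S u) := by rw [hek, one_mul]
          _ = ((e u) ^ 2 * S u) * (e u) ^ (k - 1) := by
              conv_lhs => rw [show k = (k - 1) + 1 by omega]
              rw [pow_succ]; ring
          _ = (((G.degree u : ℂ) - lam) * σ u) * (e u) ^ (k - 1) := by rw [← h2]
          _ = ((G.degree u : ℂ) - lam) * (σ u * (e u) ^ (k - 1)) := by ring
      rw [hmain]
      ring

/-- The set of eigenvalues of `L(G^{k,k/2})` equals the union, over all nonempty `U ⊆ V` with
`G[U]` connected and all diagonal matrices `E = diag(ε)` with `k`-th-root-of-unity entries,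
of the sets of eigenvalues of the complex matrices `D_U − E·A_U·E`. -/
theorem stmt7 {V : Type*} [Fintype V] [DecidableEq V] (k s : ℕ)
    (hk : 4 ≤ k) (hks : k = 2 * s) (G : SimpleGraph V) [DecidableRel G.Adj] :
    {lam : ℂ | ∃ x : V × Fin s → ℂ, IsLapEigenpair k s G lam x} =
      {lam : ℂ | ∃ U : Finset V, U.Nonempty ∧ (G.induce (↑U : Set V)).Connected ∧
        ∃ eps : {u // u ∈ U} → ℂ, (∀ u, eps u ^ k = 1) ∧
          ∃ y : {u // u ∈ U} → ℂ, y ≠ 0 ∧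
            (Matrix.diagonal (fun u : {u // u ∈ U} => (G.degree u.1 : ℂ)) -
                Matrix.diagonal eps * (G.adjMatrix ℂ).submatrix Subtype.val Subtype.val *
                  Matrix.diagonal eps) *ᵥ y = lam • y} := by
  ext lam
  simp only [Set.mem_setOf_eq]
  constructor
  · rintro ⟨x, hx⟩
    exact forward k s hk hks G lam x hx
  · rintro ⟨U, _, _, eps, heps, y, hy0, hyeq⟩
    exact backward k s hk hks G lam U eps heps y hy0 hyeq
end

section
/- For a finite simple graph G, the set of H-eigenvalues of the Laplacian tensor L(G^{k,k/2}) equals the union, over all nonempty subsets U ⊆ V with the induced subgraph G[U] connected, of the sets of eigenvalues of the real symmetric matrices D_U − A_U. -/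
open scoped BigOperators
open Matrix

/-!
Write `a_u = ∏_{p ∈ 𝐮} x_p`. Multiplying the equation at `v ∈ 𝐮` by `x_v` gives
`(d_u - λ) x_v^k = a_u ∑_{w ~ u} a_w`. So if `λ` is no degree, `x_v^k` does not depend on
`v ∈ 𝐮`, hence `a_u² = x_v^k`, and `a ≠ 0` satisfies `(L_G a)_u = λ a_u` wherever `a_u ≠ 0`.
Restricting `a` to the component `U` of a support vertex in the graph of `G`-edges between
support vertices gives an eigenvector of `D_U - A_U`, because the neighbours of `U` outside `U`
carry `a = 0`. If `λ = d_u`, it is the eigenvalue of the `1 × 1` matrix of `{u}`.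

Conversely, an eigenvector of `D_U - A_U` extended by zero satisfies the same support condition,
and spreading each `a_u` over the half edge `𝐮` as `s`-th roots of `|a_u|`, with the sign of
`a_u` on one coordinate, gives a real eigenvector of the tensor. Where `a_u = 0` both sides of
the equation vanish since `x = 0` on `𝐮` and `s ≥ 2`.
-/

section HalfEdge

open Finset

variable {ι : Type*} [Fintype ι]

lemma sq_prod_eq_of_forall_pow_eq [Nonempty ι] {f : ι → ℝ} {t : ℝ}
    (h : ∀ i, f i ^ (2 * Fintype.card ι) = t) : (∏ i, f i) ^ 2 = t := by
  obtain ⟨i₀⟩ := ‹Nonempty ι›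
  have hsq : ∀ i, f i ^ 2 = f i₀ ^ 2 := fun i =>
    (pow_left_inj₀ (sq_nonneg _) (sq_nonneg _) Fintype.card_ne_zero).mp <| by
      rw [← pow_mul, ← pow_mul, h, h]
  rw [← prod_pow, prod_congr rfl fun i _ => hsq i, prod_const, card_univ, ← pow_mul, h]

variable [DecidableEq ι]

lemma pow_eq_sq_prod_of_mul_pow_eq_prod_erase_mul [Nonempty ι] {f : ι → ℝ} {c S : ℝ}
    (hc : c ≠ 0)
    (h : ∀ i, c * f i ^ (2 * Fintype.card ι - 1) = (∏ j ∈ univ.erase i, f j) * S) :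
    (∀ i, f i ^ (2 * Fintype.card ι) = (∏ j, f j) ^ 2) ∧
      c * (∏ j, f j) ^ 2 = (∏ j, f j) * S := by
  have hpow : ∀ i, f i ^ (2 * Fintype.card ι) = (∏ j, f j) * S / c := by
    intro i
    rw [eq_div_iff hc, mul_comm, ← prod_erase_mul univ f (mem_univ i), mul_right_comm,
      ← h i, mul_assoc, pow_sub_one_mul (by positivity)]
  have hsq := sq_prod_eq_of_forall_pow_eq hpow
  refine ⟨fun i => by rw [hpow, hsq], ?_⟩
  rw [hsq, mul_div_cancel₀ _ hc]

lemma pow_sub_one_eq_prod_erase_mul_prod {f : ι → ℝ}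
    (hf : ∀ i, f i ^ (2 * Fintype.card ι) = (∏ j, f j) ^ 2) (i : ι) :
    f i ^ (2 * Fintype.card ι - 1) = (∏ j ∈ univ.erase i, f j) * ∏ j, f j := by
  have hN : 2 * Fintype.card ι ≠ 0 := by
    have := Fintype.card_pos_iff.mpr ⟨i⟩
    omega
  by_cases hfi : f i = 0
  · rw [hfi, zero_pow (by omega), prod_eq_zero (mem_univ i) hfi, mul_zero]
  · apply mul_right_cancel₀ hfi
    rw [pow_sub_one_mul hN, hf, mul_right_comm, prod_erase_mul univ f (mem_univ i), sq]

noncomputable def signedRoot (i₀ : ι) (t : ℝ) (i : ι) : ℝ :=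
  (if i = i₀ then (SignType.sign t : ℝ) else 1) * |t| ^ ((Fintype.card ι : ℝ)⁻¹)

lemma prod_signedRoot (i₀ : ι) (t : ℝ) : ∏ i, signedRoot i₀ t i = t := by
  have : Nonempty ι := ⟨i₀⟩
  simp only [signedRoot]
  rw [prod_mul_distrib, prod_ite_eq', if_pos (mem_univ _), prod_const, card_univ,
    Real.rpow_inv_natCast_pow (abs_nonneg t) Fintype.card_ne_zero, sign_mul_abs]

lemma signedRoot_pow (i₀ : ι) (t : ℝ) (i : ι) :
    signedRoot i₀ t i ^ (2 * Fintype.card ι) = t ^ 2 := by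
  have : Nonempty ι := ⟨i₀⟩
  have hN : Fintype.card ι ≠ 0 := Fintype.card_ne_zero
  rcases eq_or_ne t 0 with rfl | ht
  · simp [signedRoot, Real.zero_rpow (inv_ne_zero (Nat.cast_ne_zero.mpr hN)), hN]
  have hsign : (if i = i₀ then (SignType.sign t : ℝ) else 1) ^ (2 * Fintype.card ι) = 1 := by
    split_ifs
    · rw [← SignType.coe_pow, SignType.pow_even _ (even_two_mul _) (sign_ne_zero.mpr ht),
        SignType.coe_one]
    · exact one_pow _
  rw [signedRoot, mul_pow, hsign, one_mul, pow_mul',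
    Real.rpow_inv_natCast_pow (abs_nonneg t) hN, sq_abs]

end HalfEdge

lemma Matrix.submatrix_val_mulVec_of_forall_notMem {l m n R : Type*} [Fintype m]
    [NonUnitalNonAssocSemiring R] (M : Matrix l m R) (e : n → l) (U : Finset m) {Y : m → R}
    (hY : ∀ j ∉ U, Y j = 0) :
    M.submatrix e Subtype.val *ᵥ (fun j : U => Y j) = fun i => (M *ᵥ Y) (e i) := by
  ext i
  simp only [mulVec, dotProduct, submatrix_apply]
  rw [Finset.sum_coe_sort U fun j => M (e i) j * Y j]
  exact Finset.sum_subset (Finset.subset_univ U) fun j _ hj => by rw [hY j hj, mul_zero]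

namespace SimpleGraph

lemma ConnectedComponent.connected_induce_supp_of_le {V : Type*} {G G' : SimpleGraph V}
    (hle : G' ≤ G) (C : G'.ConnectedComponent) : (G.induce C.supp).Connected :=
  C.maximal_connected_induce_supp.1.mono fun _ _ h => hle h

variable {V : Type*} [Fintype V] [DecidableEq V] (G : SimpleGraph V) [DecidableRel G.Adj]

lemma diagonal_sub_adjMatrix_submatrix {W : Type*} [DecidableEq W] (e : W → V)
    (he : Function.Injective e) :
    diagonal (fun i => (G.degree (e i) : ℝ)) - (G.adjMatrix ℝ).submatrix e e =
      (G.lapMatrix ℝ).submatrix e e := by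
  rw [lapMatrix, degMatrix, submatrix_sub, Pi.sub_apply, Pi.sub_apply,
    submatrix_diagonal _ _ he]
  rfl

def IsLapEigenOnSupport (lam : ℝ) (a : V → ℝ) : Prop :=
  ∀ u, a u ≠ 0 → (G.lapMatrix ℝ *ᵥ a) u = lam * a u

lemma exists_connected_eigenvector_of_isLapEigenOnSupport {lam : ℝ} {a : V → ℝ}
    (ha : G.IsLapEigenOnSupport lam a) {u₀ : V} (hu₀ : a u₀ ≠ 0) :
    ∃ U : Finset V, U.Nonempty ∧ (G.induce (↑U : Set V)).Connected ∧
      ∃ y : U → ℝ, y ≠ 0 ∧ (G.lapMatrix ℝ).submatrix Subtype.val Subtype.val *ᵥ y = lam • y := by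
  classical
  let G' := ((⊤ : G.Subgraph).induce {u | a u ≠ 0}).spanningCoe
  let C := G'.connectedComponentMk u₀
  have hCa : ∀ u ∈ C.supp, a u ≠ 0 := by
    intro u hu
    -- a vertex of `C` other than `u₀` has a `G'`-edge, and `G'`-edges join support vertices
    obtain ⟨p⟩ := C.reachable_of_mem_supp hu rfl
    cases p with
    | nil => exact hu₀
    | cons h _ => exact h.1
  have hCnbr : ∀ u ∈ C.supp, ∀ w, G.Adj u w → a w ≠ 0 → w ∈ C.supp := fun u hu w huw hw =>
    C.mem_supp_of_adj_mem_supp hu ⟨hCa u hu, hw, huw⟩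
  let Y := C.supp.indicator a
  have hY : ∀ u ∈ C.supp, (G.lapMatrix ℝ *ᵥ Y) u = lam * Y u := by
    intro u hu
    have hnbr : ∑ w ∈ G.neighborFinset u, Y w = ∑ w ∈ G.neighborFinset u, a w := by
      refine Finset.sum_congr rfl fun w hw => ?_
      by_cases haw : a w = 0
      · simp [Y, haw]
      · exact Set.indicator_of_mem (hCnbr u hu w ((G.mem_neighborFinset u w).mp hw) haw) a
    have hYu : Y u = a u := Set.indicator_of_mem hu a
    rw [lapMatrix_mulVec_apply, hnbr, hYu, ← lapMatrix_mulVec_apply, ha u (hCa u hu)]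
  refine ⟨C.supp.toFinset, ⟨u₀, by simp [C]⟩, by
    rw [Set.coe_toFinset]; exact C.connected_induce_supp_of_le (Subgraph.spanningCoe_le _),
    fun w => Y w, fun h => hu₀ ?_, ?_⟩
  · simpa [Y, C] using congrFun h ⟨u₀, by simp [C]⟩
  · rw [submatrix_val_mulVec_of_forall_notMem _ _ C.supp.toFinset (Y := Y) fun w hw =>
      Set.indicator_of_notMem (by simpa using hw) a]
    ext ⟨u, hu⟩
    exact hY u (by simpa using hu)

lemma exists_isLapEigenOnSupport_of_eigenvector {lam : ℝ} {U : Finset V} {y : U → ℝ}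
    (hy0 : y ≠ 0)
    (hy : (G.lapMatrix ℝ).submatrix Subtype.val Subtype.val *ᵥ y = lam • y) :
    ∃ a : V → ℝ, a ≠ 0 ∧ G.IsLapEigenOnSupport lam a := by
  let a : V → ℝ := fun u => if h : u ∈ U then y ⟨u, h⟩ else 0
  have hay : (fun u : U => a u) = y := funext fun u => dif_pos u.2
  refine ⟨a, fun h => hy0 (hay ▸ funext fun u => congrFun h u), fun u hu => ?_⟩
  have hU : u ∈ U := by
    by_contra h
    exact hu (dif_neg h)
  have h := congrFun (submatrix_val_mulVec_of_forall_notMem (G.lapMatrix ℝ) Subtype.val U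
    (Y := a) fun w hw => dif_neg hw) ⟨u, hU⟩
  rw [hay, hy, Pi.smul_apply, smul_eq_mul] at h
  rw [← h]
  simp [a, hU]

lemma exists_connected_eigenvector_degree (u : V) :
    ∃ U : Finset V, U.Nonempty ∧ (G.induce (↑U : Set V)).Connected ∧
      ∃ y : U → ℝ, y ≠ 0 ∧
        (G.lapMatrix ℝ).submatrix Subtype.val Subtype.val *ᵥ y = (G.degree u : ℝ) • y := by
  refine ⟨{u}, Finset.singleton_nonempty u, ?_, fun _ => 1, one_ne_zero, ?_⟩
  · simpa [connected_iff] using Preconnected.of_subsingleton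
  · ext ⟨w, hw⟩
    obtain rfl := Finset.mem_singleton.mp hw
    simp [mulVec, dotProduct, lapMatrix, degMatrix]

end SimpleGraph

section PowerHypergraph

open Finset SimpleGraph

variable {V : Type*} [Fintype V] [DecidableEq V] {G : SimpleGraph V} [DecidableRel G.Adj]

lemma isLapEigenpair_ofReal_iff {k s : ℕ} {lam : ℝ} {x : V × Fin s → ℝ} :
    IsLapEigenpair k s G (lam : ℂ) (fun v => (x v : ℂ)) ↔
      x ≠ 0 ∧ ∀ u v, ((G.degree u : ℝ) - lam) * x (u, v) ^ (k - 1) =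
        ∑ w ∈ G.neighborFinset u, (∏ p ∈ univ.erase v, x (u, p)) * ∏ q, x (w, q) := by
  refine and_congr (not_congr ?_) (forall₂_congr fun u v => ?_)
  · simp [funext_iff]
  · beta_reduce
    norm_cast

lemma exists_isLapEigenOnSupport_of_isLapEigenpair {s : ℕ} (hs : s ≠ 0) {lam : ℝ}
    {x : V × Fin s → ℝ} (hx : IsLapEigenpair (2 * s) s G (lam : ℂ) (fun v => (x v : ℂ)))
    (hdeg : ∀ u, (G.degree u : ℝ) ≠ lam) :
    ∃ a : V → ℝ, a ≠ 0 ∧ G.IsLapEigenOnSupport lam a := by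
  obtain ⟨hx0, hx⟩ := isLapEigenpair_ofReal_iff.mp hx
  have : Nonempty (Fin s) := ⟨⟨0, Nat.pos_of_ne_zero hs⟩⟩
  have hvert (u : V) := pow_eq_sq_prod_of_mul_pow_eq_prod_erase_mul (f := fun q => x (u, q))
    (sub_ne_zero.mpr (hdeg u)) (by simpa only [Fintype.card_fin, ← mul_sum] using hx u)
  simp only [Fintype.card_fin] at hvert
  refine ⟨fun u => ∏ q, x (u, q), fun h => hx0 ?_, fun u hu => ?_⟩
  · ext ⟨u, q⟩
    have hq := (hvert u).1 q
    rw [congrFun h u, Pi.zero_apply, zero_pow two_ne_zero] at hq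
    exact pow_eq_zero_iff (by omega) |>.mp hq
  · have hS : ((G.degree u : ℝ) - lam) * ∏ q, x (u, q) =
        ∑ w ∈ G.neighborFinset u, ∏ q, x (w, q) :=
      mul_left_cancel₀ hu (by linear_combination (hvert u).2)
    rw [lapMatrix_mulVec_apply]
    linear_combination hS

lemma exists_isLapEigenpair_of_isLapEigenOnSupport {s : ℕ} (hs : 2 ≤ s) {lam : ℝ}
    {a : V → ℝ} (ha0 : a ≠ 0) (ha : G.IsLapEigenOnSupport lam a) :
    ∃ x : V × Fin s → ℝ, IsLapEigenpair (2 * s) s G (lam : ℂ) (fun v => (x v : ℂ)) := by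
  let x : V × Fin s → ℝ := fun p => signedRoot ⟨0, by omega⟩ (a p.1) p.2
  have hprod (u : V) : ∏ q, x (u, q) = a u := prod_signedRoot (⟨0, by omega⟩ : Fin s) (a u)
  have hbal (u : V) (q : Fin s) :
      x (u, q) ^ (2 * Fintype.card (Fin s)) = (∏ p, x (u, p)) ^ 2 := by
    rw [hprod]
    exact signedRoot_pow _ _ _
  refine ⟨x, isLapEigenpair_ofReal_iff.mpr ⟨fun h => ha0 (funext fun u => ?_), fun u v => ?_⟩⟩
  · rw [← hprod u, h]
    simp [zero_pow (by omega : s ≠ 0)]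
  simp_rw [hprod, ← mul_sum]
  by_cases hu : a u = 0
  · have hx0 (q : Fin s) : x (u, q) = 0 := by
      have h := hbal u q
      rw [hprod, hu, zero_pow two_ne_zero] at h
      exact pow_eq_zero_iff (by simp; omega) |>.mp h
    have : Nontrivial (Fin s) := Fin.nontrivial_iff_two_le.mpr hs
    obtain ⟨p, hp⟩ := exists_ne v
    rw [hx0 v, zero_pow (by omega), mul_zero,
      prod_eq_zero (mem_erase.mpr ⟨hp, mem_univ p⟩) (hx0 p), zero_mul]
  · have hS := ha u hu
    rw [lapMatrix_mulVec_apply] at hS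
    have hroot := pow_sub_one_eq_prod_erase_mul_prod (hbal u) v
    rw [Fintype.card_fin, hprod] at hroot
    rw [hroot]
    linear_combination (∏ p ∈ univ.erase v, x (u, p)) * hS

end PowerHypergraph

/-- The set of `H`-eigenvalues of `L(G^{k,k/2})` (real eigenvalues admitting a real
eigenvector) equals the union, over all nonempty `U ⊆ V` with `G[U]` connected, of the sets of
eigenvalues of the real symmetric matrices `D_U − A_U`. -/
theorem stmt8 {V : Type*} [Fintype V] [DecidableEq V] (k s : ℕ)
    (hk : 4 ≤ k) (hks : k = 2 * s) (G : SimpleGraph V) [DecidableRel G.Adj] :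
    {lam : ℝ | ∃ x : V × Fin s → ℝ,
        IsLapEigenpair k s G (lam : ℂ) (fun v => (x v : ℂ))} =
      {lam : ℝ | ∃ U : Finset V, U.Nonempty ∧ (G.induce (↑U : Set V)).Connected ∧
        ∃ y : {u // u ∈ U} → ℝ, y ≠ 0 ∧
          (Matrix.diagonal (fun u : {u // u ∈ U} => (G.degree u.1 : ℝ)) -
              (G.adjMatrix ℝ).submatrix Subtype.val Subtype.val) *ᵥ y = lam • y} := by
  subst hks
  simp_rw [G.diagonal_sub_adjMatrix_submatrix _ Subtype.val_injective]
  ext lam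
  constructor
  · rintro ⟨x, hx⟩
    by_cases hdeg : ∃ u, (G.degree u : ℝ) = lam
    · obtain ⟨u, rfl⟩ := hdeg
      exact G.exists_connected_eigenvector_degree u
    · obtain ⟨a, ha0, ha⟩ :=
        exists_isLapEigenOnSupport_of_isLapEigenpair (by omega) hx (not_exists.mp hdeg)
      obtain ⟨u₀, hu₀⟩ := Function.ne_iff.mp ha0
      exact G.exists_connected_eigenvector_of_isLapEigenOnSupport ha hu₀
  · rintro ⟨U, -, -, y, hy0, hy⟩
    obtain ⟨a, ha0, ha⟩ := G.exists_isLapEigenOnSupport_of_eigenvector hy0 hy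
    exact exists_isLapEigenpair_of_isLapEigenOnSupport (by omega) ha0 ha
end

section
/- Let G be a connected non-bipartite finite simple graph and suppose k ≡ 0 (mod 4). Then ρ^L(G^{k,k/2}) = ρ^Q(G^{k,k/2}), and the set of eigenvalues of L(G^{k,k/2}) equals the set of eigenvalues of Q(G^{k,k/2}). -/
open scoped BigOperators
open Matrix

/-- `lam` is an eigenvalue of the signless Laplacian tensor `Q(G^{k,k/2})` with
eigenvector `x`. -/
def IsSignlessLapEigenpair {V : Type*} [Fintype V] [DecidableEq V] (k s : ℕ)
    (G : SimpleGraph V) [DecidableRel G.Adj]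
    (lam : ℂ) (x : V × Fin s → ℂ) : Prop :=
  x ≠ 0 ∧ ∀ (u : V) (v : Fin s),
    (lam - (G.degree u : ℂ)) * x (u, v) ^ (k - 1) =
      ∑ w ∈ G.neighborFinset u,
        (∏ p ∈ Finset.univ.erase v, x (u, p)) * ∏ q : Fin s, x (w, q)

/-!
Multiply the first coordinate of every half edge by `i`. Every product over a half edge gets
multiplied by `i`, and, since `i ^ (k - 1) = -i` when `4 ∣ k`, the eigenvalue equation
`c u * x_v ^ (k - 1) = …` at `v ∈ 𝐮` turns into the same equation with `-c` in place of `c`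
(the left side picks up `-i` or `1`, the right side `i` or `i ^ 2 = -1`, according as `v` is
the twisted coordinate or not). As `L` and `Q` differ exactly by the sign of `c u = deg u - λ`,
this maps eigenvectors of `L` to eigenvectors of `Q` for the same `λ`, and back.
-/

theorem Complex.I_pow_sub_one_of_four_dvd {k : ℕ} (hk : k ≠ 0) (hk4 : 4 ∣ k) :
    Complex.I ^ (k - 1) = -Complex.I := by
  obtain ⟨m, rfl⟩ := hk4
  rw [show 4 * m - 1 = 4 * (m - 1) + 3 by omega, pow_add, pow_mul, Complex.I_pow_four,
    one_pow, one_mul, pow_succ, Complex.I_sq, neg_one_mul]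

theorem Finset.prod_ite_eq_mul {ι M : Type*} [CommMonoid M] [DecidableEq ι] (t : Finset ι)
    (a : ι) (b : M) (f : ι → M) :
    ∏ p ∈ t, (if p = a then b else 1) * f p = (if a ∈ t then b else 1) * ∏ p ∈ t, f p := by
  rw [Finset.prod_mul_distrib, Finset.prod_ite_eq' t a fun _ => b]

section HalfEdgeTwist

variable {V : Type*} {s : ℕ} [NeZero s]

/-- The coefficients `c u` stand for `deg u - lam` (for `L`) or `lam - deg u` (for `Q`). -/
def SatisfiesEigenEquation [Fintype V] (k : ℕ) (G : SimpleGraph V) [DecidableRel G.Adj]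
    (c : V → ℂ) (x : V × Fin s → ℂ) : Prop :=
  ∀ (u : V) (v : Fin s), c u * x (u, v) ^ (k - 1) =
    ∑ w ∈ G.neighborFinset u, (∏ p ∈ Finset.univ.erase v, x (u, p)) * ∏ q : Fin s, x (w, q)

def halfEdgeTwist (x : V × Fin s → ℂ) : V × Fin s → ℂ :=
  fun a => (if a.2 = 0 then Complex.I else 1) * x a

theorem halfEdgeTwist_ne_zero {x : V × Fin s → ℂ} (hx : x ≠ 0) : halfEdgeTwist x ≠ 0 := by
  refine fun h => hx (funext fun a => ?_)
  have ha := congrFun h a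
  simp only [halfEdgeTwist, Pi.zero_apply, mul_eq_zero] at ha
  exact ha.resolve_left (by split_ifs <;> simp)

theorem SatisfiesEigenEquation.neg_halfEdgeTwist [Fintype V] {k : ℕ} (hk : k ≠ 0) (hk4 : 4 ∣ k)
    {G : SimpleGraph V} [DecidableRel G.Adj] {c : V → ℂ} {x : V × Fin s → ℂ}
    (h : SatisfiesEigenEquation k G c x) :
    SatisfiesEigenEquation k G (-c) (halfEdgeTwist x) := by
  intro u v
  have hw (w : V) : ∏ q : Fin s, halfEdgeTwist x (w, q) = Complex.I * ∏ q : Fin s, x (w, q) := by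
    simp only [halfEdgeTwist, Finset.prod_ite_eq_mul, Finset.mem_univ, if_true]
  have hu : ∏ p ∈ Finset.univ.erase v, halfEdgeTwist x (u, p) =
      (if v = 0 then 1 else Complex.I) * ∏ p ∈ Finset.univ.erase v, x (u, p) := by
    simp only [halfEdgeTwist, Finset.prod_ite_eq_mul, Finset.mem_erase, Finset.mem_univ,
      and_true, ne_comm, ite_not]
  calc (-c) u * halfEdgeTwist x (u, v) ^ (k - 1)
      = (if v = 0 then 1 else Complex.I) * Complex.I * (c u * x (u, v) ^ (k - 1)) := by
        by_cases h0 : v = 0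
        · simp [halfEdgeTwist, h0, mul_pow, Complex.I_pow_sub_one_of_four_dvd hk hk4]
          ring
        · simp [halfEdgeTwist, h0]
    _ = _ := by
        rw [h u v, Finset.mul_sum]
        refine Finset.sum_congr rfl fun w _ => ?_
        rw [hu, hw]
        ring

end HalfEdgeTwist

theorem exists_isLapEigenpair_iff_exists_isSignlessLapEigenpair {V : Type*} [Fintype V]
    [DecidableEq V] {k s : ℕ} [NeZero s] (hk : k ≠ 0) (hk4 : 4 ∣ k) (G : SimpleGraph V)
    [DecidableRel G.Adj] (lam : ℂ) :
    (∃ x, IsLapEigenpair k s G lam x) ↔ ∃ x, IsSignlessLapEigenpair k s G lam x := by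
  constructor
  · rintro ⟨x, hx, heq⟩
    refine ⟨halfEdgeTwist x, halfEdgeTwist_ne_zero hx, ?_⟩
    simpa only [SatisfiesEigenEquation, Pi.neg_apply, neg_sub] using
      SatisfiesEigenEquation.neg_halfEdgeTwist (c := fun u => (G.degree u : ℂ) - lam) hk hk4 heq
  · rintro ⟨x, hx, heq⟩
    refine ⟨halfEdgeTwist x, halfEdgeTwist_ne_zero hx, ?_⟩
    simpa only [SatisfiesEigenEquation, Pi.neg_apply, neg_sub] using
      SatisfiesEigenEquation.neg_halfEdgeTwist (c := fun u => lam - (G.degree u : ℂ)) hk hk4 heq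

theorem stmt13_general {V : Type*} [Fintype V] [DecidableEq V] (k s : ℕ)
    (hk : 4 ≤ k) (hks : k = 2 * s) (hk4 : 4 ∣ k)
    (G : SimpleGraph V) [DecidableRel G.Adj] :
    sSup {r : ℝ | ∃ lam : ℂ,
        (∃ x : V × Fin s → ℂ, IsLapEigenpair k s G lam x) ∧ r = ‖lam‖} =
      sSup {r : ℝ | ∃ lam : ℂ,
        (∃ x : V × Fin s → ℂ, IsSignlessLapEigenpair k s G lam x) ∧ r = ‖lam‖} ∧
    {lam : ℂ | ∃ x : V × Fin s → ℂ, IsLapEigenpair k s G lam x} =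
      {lam : ℂ | ∃ x : V × Fin s → ℂ, IsSignlessLapEigenpair k s G lam x} := by
  have : NeZero s := ⟨by omega⟩
  simp only [exists_isLapEigenpair_iff_exists_isSignlessLapEigenpair (by omega) hk4 G, and_self]

/-- If `G` is a connected non-bipartite simple graph and `4 ∣ k`, then the Laplacian and
signless Laplacian tensors of `G^{k,k/2}` have the same spectral radius and the same
spectrum. -/
theorem stmt13 {V : Type*} [Fintype V] [DecidableEq V] (k s : ℕ)
    (hk : 4 ≤ k) (hks : k = 2 * s) (hk4 : 4 ∣ k)
    (G : SimpleGraph V) [DecidableRel G.Adj]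
    (hconn : G.Connected) (hnb : ¬ G.Colorable 2) :
    sSup {r : ℝ | ∃ lam : ℂ,
        (∃ x : V × Fin s → ℂ, IsLapEigenpair k s G lam x) ∧ r = ‖lam‖} =
      sSup {r : ℝ | ∃ lam : ℂ,
        (∃ x : V × Fin s → ℂ, IsSignlessLapEigenpair k s G lam x) ∧ r = ‖lam‖} ∧
    {lam : ℂ | ∃ x : V × Fin s → ℂ, IsLapEigenpair k s G lam x} =
      {lam : ℂ | ∃ x : V × Fin s → ℂ, IsSignlessLapEigenpair k s G lam x} :=
  stmt13_general k s hk hks hk4 G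
end
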